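/- arXiv:1803.04063 — 4 statements merged into one kernel-verified Lean document; each statement's English description precedes it below -/
import Mathlib

section
/- For a tower of finite field extensions K ⊆ L ⊆ M over a base field k of characteristic 0, the resolvent degree satisfies RD(M/K) = max(RD(M/L), RD(L/K)). -/
noncomputable section

variable (k : Type) [Field k]

/-- `TrdegLE k F d` : the transcendence degree of `F` over `k` is at most `d`,
i.e. there is a finite subset of `F` of cardinality at most `d` over which `F` is algebraic. -/
def TrdegLE (F : Type) [Field F] [Algebra k F] (d : ℕ) : Prop :=
  ∃ s : Finset F, s.card ≤ d ∧
    Algebra.IsAlgebraic (IntermediateField.adjoin k (s : Set F)) F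

/-- One step of a resolvent tower inside an ambient field `Ω`: `E' = E ⊗_F F̃` for some
subfield `F ⊆ E` of transcendence degree at most `d` over `k` and some finite extension
`F̃/F` (realized inside `Ω`, so that `E' = E ⊔ F̃` with `[E' : E] = [F̃ : F]`). -/
def RDStep (Ω : Type) [Field Ω] [Algebra k Ω] (d : ℕ)
    (E E' : IntermediateField k Ω) : Prop :=
  ∃ (F Ft : IntermediateField k Ω) (_hFE : F ≤ E) (hFFt : F ≤ Ft),
    TrdegLE k F d ∧
    (letI : Algebra F Ft := (IntermediateField.inclusion hFFt).toRingHom.toAlgebra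
     letI : Module F Ft := Algebra.toModule
     FiniteDimensional F Ft) ∧
    E' = E ⊔ Ft ∧
    (letI : Algebra F Ft := (IntermediateField.inclusion hFFt).toRingHom.toAlgebra
     letI : Module F Ft := Algebra.toModule
     letI : Algebra E (E ⊔ Ft : IntermediateField k Ω) :=
       (IntermediateField.inclusion le_sup_left).toRingHom.toAlgebra
     letI : Module E (E ⊔ Ft : IntermediateField k Ω) := Algebra.toModule
     Module.finrank F Ft = Module.finrank E (E ⊔ Ft : IntermediateField k Ω))

variable (K L : Type) [Field K] [Field L] [Algebra k K] [Algebra k L]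

/-- `RDLE k K L d` : the resolvent degree of `L/K` over `k` is at most `d`, i.e. there is a
finite tower `K = L₀ ⊆ L₁ ⊆ ⋯ ⊆ L_r` of finite extensions (inside an algebraic closure of
`K`), each stage being a base change `L_i = L_{i-1} ⊗_{F_i} F̃_i` along a finite extension
of a subfield `F_i ⊆ L_{i-1}` of transcendence degree at most `d` over `k`, together with a
`K`-embedding of `L` into `L_r`. -/
def RDLE [Algebra K L] [IsScalarTower k K L] (d : ℕ) : Prop :=
  ∃ (r : ℕ) (E : Fin (r + 1) → IntermediateField k (AlgebraicClosure K)),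
    E 0 = (IsScalarTower.toAlgHom k K (AlgebraicClosure K)).fieldRange ∧
    (∀ i : Fin r, RDStep k (AlgebraicClosure K) d (E i.castSucc) (E i.succ)) ∧
    ∃ f : L →ₐ[k] AlgebraicClosure K,
      f.fieldRange ≤ E (Fin.last r) ∧
      ∀ x : K, f (algebraMap K L x) = algebraMap K (AlgebraicClosure K) x

/-- The resolvent degree `RD_k(L/K)` of a field extension `L/K` over `k`. -/
def RD [Algebra K L] [IsScalarTower k K L] : ℕ := sInf {d | RDLE k K L d}

/-!
A tower for `L/K` followed by a tower for `M/L` gives a tower for `M/K`: transport the second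
one into `K̄` along an `L`-embedding `L̄ → K̄` and join every stage with the top of the first
tower. Conversely a tower for `M/K` is a tower for `L/K`, and transported into `L̄` and joined
with `L` it is a tower for `M/L`. What makes this work is that a step `E ⊆ E ⊔ F̃` survives
mapping and enlarging `E` to `B ⊔ E`. In characteristic 0 every step has the form
`E ⊆ E ⊔ k(α)` with `α` algebraic over some `F ≤ E` of small transcendence degree. Adjoining to
`F` the coefficients of the minimal polynomial of `α` over the larger base leaves the
transcendence degree unchanged, because they are algebraic over `F`, and it forces
`[F(α) : F] = [E(α) : E]`.
-/

open IntermediateField Polynomial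

theorem exists_fin_chain_iff_reflTransGen {α : Type*} {R : α → α → Prop} {a : α} {P : α → Prop} :
    (∃ (r : ℕ) (E : Fin (r + 1) → α), E 0 = a ∧
      (∀ i : Fin r, R (E i.castSucc) (E i.succ)) ∧ P (E (Fin.last r))) ↔
    ∃ b, Relation.ReflTransGen R a b ∧ P b := by
  constructor
  · rintro ⟨r, E, rfl, hR, hP⟩
    refine ⟨_, ?_, hP⟩
    clear hP
    induction r with
    | zero => rfl
    | succ r ih =>
      exact (ih (E ∘ Fin.castSucc) fun i => hR i.castSucc).tail (hR (Fin.last r))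
  · rintro ⟨b, hab, hP⟩
    induction hab generalizing P with
    | refl => exact ⟨0, fun _ => a, rfl, Fin.elim0, hP⟩
    | @tail b c _ hbc ih =>
      obtain ⟨r, E, h0, hR, rfl⟩ := ih (P := (· = b)) rfl
      refine ⟨r + 1, Fin.snoc E c, (Fin.snoc_castSucc (α := fun _ => α) c E 0).trans h0,
        fun i => ?_, by simpa⟩
      induction i using Fin.lastCases with
      | last => simpa using hbc
      | cast j => rw [Fin.succ_castSucc, Fin.snoc_castSucc, Fin.snoc_castSucc]; exact hR j

section TrdegLE

variable {k Ω : Type} [Field k] [Field Ω] [Algebra k Ω]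

theorem trdegLE_iff_trdeg_le {F : Type} [Field F] [Algebra k F] {d : ℕ} :
    TrdegLE k F d ↔ Algebra.trdeg k F ≤ d := by
  constructor
  · rintro ⟨s, hcard, halg⟩
    rw [isAlgebraic_adjoin_iff_top] at halg
    calc Algebra.trdeg k F ≤ Cardinal.mk (s : Set F) :=
          Algebra.IsAlgebraic.trdeg_le_cardinalMk k (s : Set F)
      _ ≤ d := by simpa using hcard
  · intro h
    obtain ⟨s, hs⟩ := exists_isTranscendenceBasis k F
    have hfin : s.Finite := Cardinal.lt_aleph0_iff_set_finite.1
      (hs.cardinalMk_eq_trdeg.trans_lt (h.trans_lt (Cardinal.natCast_lt_aleph0)))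
    have halg := hs.isAlgebraic_field
    rw [Subtype.range_coe, ← hfin.coe_toFinset] at halg
    refine ⟨hfin.toFinset, ?_, halg⟩
    have hcard := hs.cardinalMk_eq_trdeg ▸ h
    rw [← hfin.coe_toFinset] at hcard
    exact_mod_cast (Cardinal.mk_coe_finset (s := hfin.toFinset)).symm.trans_le hcard

theorem TrdegLE.mono {F : Type} [Field F] [Algebra k F] {d d' : ℕ} (h : TrdegLE k F d)
    (hd : d ≤ d') : TrdegLE k F d' :=
  let ⟨s, hs, halg⟩ := h
  ⟨s, hs.trans hd, halg⟩

theorem TrdegLE.map {Ω' : Type} [Field Ω'] [Algebra k Ω'] {F : IntermediateField k Ω} {d : ℕ}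
    (h : TrdegLE k F d) (ι : Ω →ₐ[k] Ω') : TrdegLE k (F.map ι) d := by
  rw [trdegLE_iff_trdeg_le] at h ⊢
  rwa [← (F.equivMap ι).trdeg_eq]

theorem TrdegLE.of_le_of_isIntegral {F F₁ : IntermediateField k Ω} {d : ℕ} (h : TrdegLE k F d)
    (hle : F ≤ F₁) (hint : ∀ x ∈ F₁, IsIntegral F x) : TrdegLE k F₁ d := by
  let _ : Algebra F F₁ := (inclusion hle).toAlgebra
  have : IsScalarTower k F F₁ := .of_algebraMap_eq fun _ => rfl
  have : IsScalarTower F F₁ Ω := .of_algebraMap_eq fun _ => rfl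
  have : Algebra.IsAlgebraic F F₁ := ⟨fun x => ((isIntegral_algHom_iff
    (IsScalarTower.toAlgHom F F₁ Ω) Subtype.val_injective).1 (hint x x.2)).isAlgebraic⟩
  rw [trdegLE_iff_trdeg_le] at h ⊢
  rwa [← trdeg_add_eq k F (A := F₁), trdeg_eq_zero (R := F), add_zero]

theorem trdegLE_adjoin_finset (S : Finset Ω) : TrdegLE k (adjoin k (S : Set Ω)) S.card := by
  classical
  set s := S.subtype (· ∈ adjoin k (S : Set Ω))
  have htop : adjoin k (s : Set (adjoin k (S : Set Ω))) = ⊤ := by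
    apply lift_injective
    rw [lift_adjoin, lift_top]
    congr 1
    ext x
    simpa [s] using fun hx => subset_adjoin k (S : Set Ω) (Finset.mem_coe.2 hx)
  refine ⟨s, (Finset.card_subtype _ _).trans_le (Finset.card_filter_le _ _), ⟨fun x => ?_⟩⟩
  have hx : x ∈ adjoin k (s : Set (adjoin k (S : Set Ω))) := htop ▸ mem_top
  exact isAlgebraic_algebraMap (⟨x, hx⟩ : adjoin k (s : Set (adjoin k (S : Set Ω))))

end TrdegLE

section IntermediateField

variable {k Ω : Type} [Field k] [Field Ω] [Algebra k Ω]

theorem IsIntegral.of_le {F E : IntermediateField k Ω} (hFE : F ≤ E) {α : Ω}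
    (hα : IsIntegral F α) : IsIntegral E α :=
  hα.map_of_comp_eq (inclusion hFE) (RingHom.id Ω) rfl

theorem IsIntegral.map_intermediateField {Ω' : Type} [Field Ω'] [Algebra k Ω']
    {F : IntermediateField k Ω} {α : Ω} (hα : IsIntegral F α) (ι : Ω →ₐ[k] Ω') :
    IsIntegral (F.map ι) (ι α) :=
  hα.map_of_comp_eq (F.equivMap ι : F →+* F.map ι) ι.toRingHom rfl

theorem isIntegral_of_mem_sup_adjoin {F : IntermediateField k Ω} {S : Set Ω}
    (hS : ∀ s ∈ S, IsIntegral F s) {x : Ω} (hx : x ∈ F ⊔ adjoin k S) : IsIntegral F x := by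
  rw [← restrictScalars_adjoin_eq_sup, mem_restrictScalars] at hx
  have := isAlgebraic_adjoin hS
  exact isIntegral_iff.1 (Algebra.IsIntegral.isIntegral (⟨x, hx⟩ : adjoin F S))

theorem minpoly_map_dvd_of_le {F E : IntermediateField k Ω} (hFE : F ≤ E) (α : Ω) :
    (minpoly E α).map (algebraMap E Ω) ∣ (minpoly F α).map (algebraMap F Ω) := by
  let _ : Algebra F E := (inclusion hFE).toAlgebra
  have : IsScalarTower F E Ω := .of_algebraMap_eq fun _ => rfl
  rw [IsScalarTower.algebraMap_eq F E Ω, ← Polynomial.map_map]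
  exact Polynomial.map_dvd (algebraMap E Ω) (minpoly.dvd_map_of_isScalarTower F E α)

theorem isIntegral_coeff_minpoly_of_le {F E : IntermediateField k Ω} (hFE : F ≤ E) {α : Ω}
    (hα : IsIntegral F α) (n : ℕ) : IsIntegral F ((minpoly E α).coeff n : Ω) := by
  simpa using isIntegral_coeff_of_dvd _ _ (minpoly.monic hα)
    ((minpoly.monic (hα.of_le hFE)).map _) (minpoly_map_dvd_of_le hFE α) n

theorem isIntegral_and_natDegree_minpoly_eq {F E : IntermediateField k Ω} (hFE : F ≤ E)
    {α : Ω} (hα : IsIntegral E α) (hcoeff : ∀ n, ((minpoly E α).coeff n : Ω) ∈ F) :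
    IsIntegral F α ∧ (minpoly F α).natDegree = (minpoly E α).natDegree := by
  let _ : Algebra F E := (inclusion hFE).toAlgebra
  have : IsScalarTower F E Ω := .of_algebraMap_eq fun _ => rfl
  have hlifts : minpoly E α ∈ lifts (algebraMap F E) :=
    (lifts_iff_coeff_lifts _).2 fun n => ⟨⟨_, hcoeff n⟩, rfl⟩
  obtain ⟨p, hp, -, hpm⟩ := lifts_and_natDegree_eq_and_monic hlifts (minpoly.monic hα)
  have hαF : IsIntegral F α := ⟨p, hpm, by
    rw [← aeval_def, ← aeval_map_algebraMap E, hp, minpoly.aeval]⟩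
  exact ⟨hαF, by rw [← minpoly.map_algebraMap hαF hlifts, natDegree_map]⟩

theorem exists_trdegLE_isIntegral {E : IntermediateField k Ω} {α : Ω} (hα : IsIntegral E α) :
    ∃ F ≤ E, ∃ d, TrdegLE k F d ∧ IsIntegral F α := by
  set q := (minpoly E α).map (algebraMap E Ω)
  have hqE : adjoin k (q.coeffs : Set Ω) ≤ E := adjoin_le_iff.2 fun x hx => by
    obtain ⟨n, -, rfl⟩ := mem_coeffs_iff.1 hx
    rw [coeff_map]
    exact Subtype.mem _
  have hcoeff (n : ℕ) : ((minpoly E α).coeff n : Ω) ∈ adjoin k (q.coeffs : Set Ω) := by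
    by_cases h0 : ((minpoly E α).coeff n : Ω) = 0
    · rw [h0]
      exact zero_mem _
    · have := coeff_mem_coeffs (p := q) (n := n) (by rwa [coeff_map])
      rw [coeff_map] at this
      exact subset_adjoin k _ this
  exact ⟨_, hqE, _, trdegLE_adjoin_finset _, (isIntegral_and_natDegree_minpoly_eq hqE hα hcoeff).1⟩

def linearEquivExtendScalars {F S : IntermediateField k Ω} (h : F ≤ S) :
    letI : Algebra F S := (inclusion h).toRingHom.toAlgebra
    S ≃ₗ[F] extendScalars h :=
  letI : Algebra F S := (inclusion h).toRingHom.toAlgebra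
  { toFun := fun x => ⟨x, x.2⟩
    invFun := fun x => ⟨x, x.2⟩
    map_add' := fun _ _ => rfl
    map_smul' := fun _ _ => rfl
    left_inv := fun _ => rfl
    right_inv := fun _ => rfl }

theorem finrank_inclusion_eq_natDegree {F S : IntermediateField k Ω} (h : F ≤ S) {α : Ω}
    (hα : IsIntegral F α) (hS : S = F ⊔ adjoin k {α}) :
    letI : Algebra F S := (inclusion h).toRingHom.toAlgebra
    Module.finrank F S = (minpoly F α).natDegree := by
  let _ : Algebra F S := (inclusion h).toRingHom.toAlgebra
  have hext : extendScalars h = F⟮α⟯ := restrictScalars_injective k <| by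
    rw [extendScalars_restrictScalars, restrictScalars_adjoin_eq_sup, hS]
  rw [← adjoin.finrank hα, ← hext]
  exact (linearEquivExtendScalars h).finrank_eq

end IntermediateField

section RDStep

variable {k Ω : Type} [Field k] [Field Ω] [Algebra k Ω] {d : ℕ}

theorem RDStep.mono {d' : ℕ} (hd : d ≤ d') {E E' : IntermediateField k Ω}
    (h : RDStep k Ω d E E') : RDStep k Ω d' E E' :=
  let ⟨F, Ft, hFE, hFFt, hF, rest⟩ := h
  ⟨F, Ft, hFE, hFFt, hF.mono hd, rest⟩

theorem rdStep_sup_adjoin {F E : IntermediateField k Ω} (hFE : F ≤ E) (hF : TrdegLE k F d)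
    {α : Ω} (hα : IsIntegral F α) : RDStep k Ω d E (E ⊔ adjoin k {α}) := by
  have hαE := hα.of_le hFE
  set S := Set.range fun n => ((minpoly E α).coeff n : Ω)
  set F₁ : IntermediateField k Ω := F ⊔ adjoin k S
  have hF₁E : F₁ ≤ E :=
    sup_le hFE (adjoin_le_iff.2 (Set.range_subset_iff.2 fun n => ((minpoly E α).coeff n).2))
  have hF₁ : TrdegLE k F₁ d := hF.of_le_of_isIntegral le_sup_left fun x hx =>
    isIntegral_of_mem_sup_adjoin (Set.forall_mem_range.2 (isIntegral_coeff_minpoly_of_le hFE hα)) hx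
  obtain ⟨hαF₁, hdeg⟩ := isIntegral_and_natDegree_minpoly_eq hF₁E hαE fun n =>
    (le_sup_right : adjoin k S ≤ F₁) (subset_adjoin k S ⟨n, rfl⟩)
  have hsup : E ⊔ (F₁ ⊔ adjoin k {α}) = E ⊔ adjoin k {α} := by
    rw [← sup_assoc, sup_eq_left.2 hF₁E]
  have hfr := finrank_inclusion_eq_natDegree (le_sup_left : F₁ ≤ F₁ ⊔ adjoin k {α}) hαF₁ rfl
  refine ⟨F₁, F₁ ⊔ adjoin k {α}, hF₁E, le_sup_left, hF₁, ?_, hsup.symm, ?_⟩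
  · let _ : Algebra F₁ (F₁ ⊔ adjoin k {α} : IntermediateField k Ω) :=
      (inclusion le_sup_left).toRingHom.toAlgebra
    exact Module.finite_of_finrank_pos (hfr ▸ minpoly.natDegree_pos hαF₁)
  · rw [hfr, hdeg]
    exact (finrank_inclusion_eq_natDegree le_sup_left hαE hsup).symm

theorem RDStep.exists_eq_sup_adjoin [CharZero k] {E E' : IntermediateField k Ω}
    (h : RDStep k Ω d E E') : ∃ (F : IntermediateField k Ω) (α : Ω),
      F ≤ E ∧ TrdegLE k F d ∧ IsIntegral F α ∧ E' = E ⊔ adjoin k {α} := by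
  obtain ⟨F, Ft, hFE, hFFt, hF, hfin, rfl, -⟩ := h
  have : FiniteDimensional F (extendScalars hFFt) := by
    let _ : Algebra F Ft := (inclusion hFFt).toRingHom.toAlgebra
    exact Module.Finite.equiv (linearEquivExtendScalars hFFt)
  have : CharZero F := charZero_of_injective_algebraMap (algebraMap k F).injective
  obtain ⟨γ, hγ⟩ := Field.exists_primitive_element F (extendScalars hFFt)
  have hFt : Ft = F ⊔ adjoin k {(γ : Ω)} := by
    rw [← restrictScalars_adjoin_eq_sup, ← lift_adjoin_simple, hγ, lift_top,
      extendScalars_restrictScalars]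
  refine ⟨F, γ, hFE, hF, isIntegral_iff.1 (.of_finite F γ), ?_⟩
  exact (congrArg (E ⊔ ·) hFt).trans (by rw [← sup_assoc, sup_eq_left.2 hFE])

theorem RDStep.map_sup [CharZero k] {Ω' : Type} [Field Ω'] [Algebra k Ω'] (ι : Ω →ₐ[k] Ω')
    (B : IntermediateField k Ω') {E E' : IntermediateField k Ω} (h : RDStep k Ω d E E') :
    RDStep k Ω' d (B ⊔ E.map ι) (B ⊔ E'.map ι) := by
  obtain ⟨F, α, hFE, hF, hα, rfl⟩ := h.exists_eq_sup_adjoin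
  rw [IntermediateField.map_sup, adjoin_map, Set.image_singleton, ← sup_assoc]
  exact rdStep_sup_adjoin ((map_mono ι hFE).trans le_sup_right) (hF.map ι)
    (hα.map_intermediateField ι)

end RDStep

section RDLE

open Relation

variable {k : Type} [Field k]

theorem reflTransGen_rdStep_map_sup [CharZero k] {Ω Ω' : Type} [Field Ω] [Algebra k Ω] [Field Ω']
    [Algebra k Ω'] {d : ℕ} (ι : Ω →ₐ[k] Ω') {A E : IntermediateField k Ω}
    {B : IntermediateField k Ω'} (hAB : A.map ι ≤ B) (h : ReflTransGen (RDStep k Ω d) A E) :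
    ReflTransGen (RDStep k Ω' d) B (B ⊔ E.map ι) := by
  have := h.lift (fun E => B ⊔ E.map ι) fun _ _ hs => hs.map_sup ι B
  rwa [Function.onFun, sup_eq_left.2 hAB] at this

theorem exists_algHom_comp_algebraMap_eq {L Ω Ω' : Type} [Field L] [Field Ω] [Field Ω']
    [Algebra k L] [Algebra k Ω] [Algebra k Ω'] [Algebra L Ω] [IsScalarTower k L Ω]
    [Algebra.IsAlgebraic L Ω] [IsAlgClosed Ω'] (g : L →ₐ[k] Ω') :
    ∃ ι : Ω →ₐ[k] Ω', ∀ y, ι (algebraMap L Ω y) = g y := by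
  let _ : Algebra L Ω' := g.toRingHom.toAlgebra
  have : IsScalarTower k L Ω' := .of_algebraMap_eq fun c => (g.commutes c).symm
  let ι : Ω →ₐ[L] Ω' := IsAlgClosed.lift
  exact ⟨ι.restrictScalars k, ι.commutes⟩

variable {K L M : Type} [Field K] [Field L] [Field M] [Algebra k K] [Algebra k L] [Algebra k M]

theorem rdle_iff_reflTransGen [Algebra K L] [IsScalarTower k K L] {d : ℕ} :
    RDLE k K L d ↔ ∃ E, ReflTransGen (RDStep k (AlgebraicClosure K) d)
      (IsScalarTower.toAlgHom k K (AlgebraicClosure K)).fieldRange E ∧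
      ∃ f : L →ₐ[k] AlgebraicClosure K, f.fieldRange ≤ E ∧
        ∀ x : K, f (algebraMap K L x) = algebraMap K (AlgebraicClosure K) x := by
  unfold RDLE
  exact exists_fin_chain_iff_reflTransGen (P := fun E => ∃ f : L →ₐ[k] AlgebraicClosure K,
    f.fieldRange ≤ E ∧ ∀ x : K, f (algebraMap K L x) = algebraMap K (AlgebraicClosure K) x)

theorem RDLE.mono [Algebra K L] [IsScalarTower k K L] {d d' : ℕ} (h : RDLE k K L d)
    (hd : d ≤ d') : RDLE k K L d' :=
  let ⟨r, E, h0, hstep, hf⟩ := h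
  ⟨r, E, h0, fun i => (hstep i).mono hd, hf⟩

theorem restrictScalars_adjoin_le_fieldRange_sup [Algebra K L] [IsScalarTower k K L] (S : Set L) :
    (adjoin K S).restrictScalars k ≤ (IsScalarTower.toAlgHom k K L).fieldRange ⊔ adjoin k S := by
  let X : IntermediateField K L :=
    ((IsScalarTower.toAlgHom k K L).fieldRange ⊔ adjoin k S).toSubfield.toIntermediateField
      fun c => (le_sup_left : _ ≤ _ ⊔ adjoin k S) ⟨c, rfl⟩
  exact (adjoin_le_iff.2 fun s hs => (le_sup_right : adjoin k S ≤ _) (subset_adjoin k S hs) :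
    adjoin K S ≤ X)

theorem RDLE.exists_of_finiteDimensional [CharZero k] [Algebra K L] [IsScalarTower k K L]
    [FiniteDimensional K L] : ∃ d, RDLE k K L d := by
  have : CharZero K := charZero_of_injective_algebraMap (algebraMap k K).injective
  obtain ⟨α, hα⟩ := Field.exists_primitive_element K L
  let f : L →ₐ[K] AlgebraicClosure K := IsAlgClosed.lift
  set E₀ := (IsScalarTower.toAlgHom k K (AlgebraicClosure K)).fieldRange
  have hint : IsIntegral E₀ (f α) := (Algebra.IsIntegral.isIntegral (R := K) (f α)).map_of_comp_eq
    ((IsScalarTower.toAlgHom k K (AlgebraicClosure K)).equivFieldRange : K →+* E₀)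
    (RingHom.id _) (by ext; rfl)
  obtain ⟨F, hFE₀, d, hF, hαF⟩ := exists_trdegLE_isIntegral hint
  refine ⟨d, rdle_iff_reflTransGen.2 ⟨_, .single (rdStep_sup_adjoin hFE₀ hF hαF),
    f.restrictScalars k, ?_, f.commutes⟩⟩
  rintro _ ⟨y, rfl⟩
  have hy : f y ∈ (adjoin K {α}).map f := ⟨y, hα ▸ mem_top, rfl⟩
  rw [adjoin_map, Set.image_singleton] at hy
  exact restrictScalars_adjoin_le_fieldRange_sup _ hy

theorem RDLE.trans [CharZero k] [Algebra K L] [Algebra L M] [Algebra K M] [IsScalarTower k K L]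
    [IsScalarTower k L M] [IsScalarTower k K M] [IsScalarTower K L M] {d₁ d₂ : ℕ}
    (h₁ : RDLE k K L d₁) (h₂ : RDLE k L M d₂) : RDLE k K M (max d₁ d₂) := by
  obtain ⟨E₁, hE₁, fL, hfL, hfLK⟩ := rdle_iff_reflTransGen.1 (h₁.mono (le_max_left d₁ d₂))
  obtain ⟨E₂, hE₂, fM, hfM, hfML⟩ := rdle_iff_reflTransGen.1 (h₂.mono (le_max_right d₁ d₂))
  obtain ⟨ι, hι⟩ := exists_algHom_comp_algebraMap_eq (Ω := AlgebraicClosure L) fL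
  have hstart : (IsScalarTower.toAlgHom k L (AlgebraicClosure L)).fieldRange.map ι ≤ E₁ := by
    rintro _ ⟨_, ⟨y, rfl⟩, rfl⟩
    exact hfL ⟨y, (hι y).symm⟩
  refine rdle_iff_reflTransGen.2 ⟨_, hE₁.trans (reflTransGen_rdStep_map_sup ι hstart hE₂),
    ι.comp fM, ?_, fun x => ?_⟩
  · rintro _ ⟨y, rfl⟩
    exact (le_sup_right : E₂.map ι ≤ _) ⟨fM y, hfM ⟨y, rfl⟩, rfl⟩
  · simp [IsScalarTower.algebraMap_apply K L M, hfML, hι, hfLK]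

theorem RDLE.tower_bot [Algebra K L] [Algebra L M] [Algebra K M] [IsScalarTower k K L]
    [IsScalarTower k L M] [IsScalarTower k K M] [IsScalarTower K L M] {d : ℕ} (h : RDLE k K M d) :
    RDLE k K L d := by
  obtain ⟨E, hE, f, hf, hfK⟩ := rdle_iff_reflTransGen.1 h
  refine rdle_iff_reflTransGen.2 ⟨E, hE, f.comp (IsScalarTower.toAlgHom k L M), ?_, fun x => ?_⟩
  · rintro _ ⟨y, rfl⟩
    exact hf ⟨_, rfl⟩
  · simpa [← IsScalarTower.algebraMap_apply] using hfK x

theorem RDLE.tower_top [CharZero k] [Algebra K L] [Algebra L M] [Algebra K M]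
    [IsScalarTower k L M] [IsScalarTower k K M] [IsScalarTower K L M] {d : ℕ} (h : RDLE k K M d) :
    RDLE k L M d := by
  obtain ⟨E, hE, f, hf, hfK⟩ := rdle_iff_reflTransGen.1 h
  let g := f.comp (IsScalarTower.toAlgHom k L M)
  let _ : Algebra L (AlgebraicClosure K) := g.toRingHom.toAlgebra
  have : IsScalarTower k L (AlgebraicClosure K) := .of_algebraMap_eq fun c => (g.commutes c).symm
  have : IsScalarTower K L (AlgebraicClosure K) := .of_algebraMap_eq fun c => by
    show _ = f (algebraMap L M (algebraMap K L c))
    rw [← IsScalarTower.algebraMap_apply, hfK]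
  have : Algebra.IsAlgebraic L (AlgebraicClosure K) := .tower_top (K := K) L
  obtain ⟨ι, hι⟩ := exists_algHom_comp_algebraMap_eq (Ω := AlgebraicClosure K)
    (IsScalarTower.toAlgHom k L (AlgebraicClosure L))
  have hstart : (IsScalarTower.toAlgHom k K (AlgebraicClosure K)).fieldRange.map ι ≤
      (IsScalarTower.toAlgHom k L (AlgebraicClosure L)).fieldRange := by
    rintro _ ⟨_, ⟨c, rfl⟩, rfl⟩
    exact ⟨algebraMap K L c, (hι _).symm.trans
      (congrArg ι (IsScalarTower.algebraMap_apply K L _ c).symm)⟩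
  refine rdle_iff_reflTransGen.2 ⟨_, reflTransGen_rdStep_map_sup ι hstart hE, ι.comp f, ?_,
    fun y => hι y⟩
  rintro _ ⟨y, rfl⟩
  exact (le_sup_right : E.map ι ≤ _) ⟨f y, hf ⟨y, rfl⟩, rfl⟩

end RDLE

/-- For a tower of finite field extensions `K ⊆ L ⊆ M` over a characteristic-zero base
field `k`, the resolvent degree satisfies `RD(M/K) = max (RD(M/L)) (RD(L/K))`. -/
theorem rd_comp (k K L M : Type) [Field k] [CharZero k] [Field K] [Field L] [Field M]
    [Algebra k K] [Algebra k L] [Algebra k M]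
    [Algebra K L] [Algebra L M] [Algebra K M]
    [IsScalarTower k K L] [IsScalarTower k L M] [IsScalarTower k K M]
    [IsScalarTower K L M]
    [FiniteDimensional K L] [FiniteDimensional L M] :
    RD k K M = max (RD k L M) (RD k K L) := by
  have hLM : RDLE k L M (RD k L M) := Nat.sInf_mem RDLE.exists_of_finiteDimensional
  have hKL : RDLE k K L (RD k K L) := Nat.sInf_mem RDLE.exists_of_finiteDimensional
  have hKM : RDLE k K M (max (RD k L M) (RD k K L)) := max_comm (RD k K L) _ ▸ hKL.trans hLM
  refine le_antisymm (Nat.sInf_le hKM) ?_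
  have h : RDLE k K M (RD k K M) := Nat.sInf_mem (s := {d | RDLE k K M d}) ⟨_, hKM⟩
  exact max_le (Nat.sInf_le h.tower_top) (Nat.sInf_le (h.tower_bot (L := L)))
end
end

section
/- Let G be a finite group, X a versal G-variety over a characteristic-0 field, and H ⊆ G a subgroup. Then X is also a versal H-variety. -/
/-!
Versality of `X` for `G`, applied to the regular representation `k(x_g : g ∈ G)` and to the
`G`-saturation of `S`, gives a `G`-equivariant `ψ : k[X] → k(x_g)` that is nonzero at some
`s ∈ S`. For a faithful `H`-variety with function field `L`, every `c : G → L` with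
`c (h * g) = h • c g` turns `x_g ↦ c g` into an `H`-equivariant specialization `k[x_g] → L`.
By Dedekind's independence of characters these `c` span `G → L` over `L`, so, `k` being infinite,
no nonzero polynomial vanishes at all of them. Choosing `c` off the denominators of `ψ` on
generators of `k[X]` and off the numerator of `ψ s`, the specialization extends to the local
ring at `c`, and composing it with `ψ` gives the required `H`-equivariant map.
-/

noncomputable section

/-- A (model of an irreducible) `G`-variety over `k`, up to birational equivalence:
a function field `E/k` with a `G`-action by `k`-algebra automorphisms, together with a
finitely generated `G`-stable affine model `A ⊆ E` whose fraction field is `E`. -/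
structure GVar (k : Type) [Field k] (G : Type) [Group G] where
  E : Type
  [fld : Field E]
  [alg : Algebra k E]
  act : G →* (E ≃ₐ[k] E)
  A : Subalgebra k E
  fg : A.FG
  stable : ∀ g : G, ∀ x ∈ A, act g x ∈ A
  frac : ∀ x : E, ∃ a ∈ A, ∃ b ∈ A, b ≠ 0 ∧ x = a / b

attribute [instance] GVar.fld GVar.alg

variable {G : Type} [Group G]

/-- A `G`-variety is faithful if `G` acts faithfully. -/
def GVar.Faithful {k : Type} [Field k] (X : GVar k G) : Prop :=
  Function.Injective X.act

/-- A faithful `G`-variety `X` is versal if for every `G`-invariant dense (Zariski) open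
`U ⊆ X` (the complement of the vanishing locus of a `G`-stable set `S ⊆ A` containing a
nonzero element) and every faithful `G`-variety `Y`, there is a `G`-equivariant rational
map `Y ⇢ U` (a `k`-algebra homomorphism `ψ : A → k(Y)`, equivariant for the `G`-actions,
whose image is not contained in the vanishing locus of `S`). -/
def GVar.IsVersal {k : Type} [Field k] (X : GVar k G) : Prop :=
  X.Faithful ∧
  ∀ (S : Set X.E) (hSA : S ⊆ (X.A : Set X.E)),
    (∀ g : G, ∀ x ∈ S, X.act g x ∈ S) → (∃ s ∈ S, s ≠ 0) →
    ∀ Y : GVar k G, Y.Faithful →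
      ∃ ψ : X.A →ₐ[k] Y.E,
        (∀ (g : G) (a : X.A), ψ ⟨X.act g a, X.stable g a a.2⟩ = Y.act g (ψ a)) ∧
        ∃ s, ∃ hs : s ∈ S, ψ ⟨s, hSA hs⟩ ≠ 0

/-- The restriction of a `G`-variety to an `H`-variety along a subgroup `H ⊆ G`. -/
def GVar.res {k : Type} [Field k] (X : GVar k G) (H : Subgroup G) : GVar k H where
  E := X.E
  act := X.act.comp H.subtype
  A := X.A
  fg := X.fg
  stable := fun g x hx => X.stable g x hx
  frac := X.frac

namespace GVar

variable {k : Type} [Field k]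

lemma Faithful.res {X : GVar k G} (hX : X.Faithful) (H : Subgroup G) :
    (X.res H).Faithful :=
  hX.comp Subtype.val_injective

def IsEquivariant (X Y : GVar k G) (ψ : X.A →ₐ[k] Y.E) : Prop :=
  ∀ (g : G) (a : X.A), ψ ⟨X.act g a, X.stable g a a.2⟩ = Y.act g (ψ a)

lemma IsEquivariant.res {X Y : GVar k G} {ψ : X.A →ₐ[k] Y.E}
    (hψ : X.IsEquivariant Y ψ) (H : Subgroup G) : (X.res H).IsEquivariant (Y.res H) ψ :=
  fun h a => hψ h a

theorem IsVersal.exists_isEquivariant_ne_zero {X : GVar k G}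
    (hX : X.IsVersal) {S : Set X.E} (hSA : S ⊆ X.A) (hS : ∃ s ∈ S, s ≠ 0)
    {Y : GVar k G} (hY : Y.Faithful) :
    ∃ ψ : X.A →ₐ[k] Y.E, X.IsEquivariant Y ψ ∧
      ∃ s, ∃ hs : s ∈ S, ψ ⟨s, hSA hs⟩ ≠ 0 := by
  let S' := ⋃ g, X.act g '' S
  have hS'A : S' ⊆ X.A := by
    simp only [S', Set.iUnion_subset_iff, Set.image_subset_iff]
    exact fun g s hs => X.stable g s (hSA hs)
  have hS' : ∀ g : G, ∀ x ∈ S', X.act g x ∈ S' := by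
    simp only [S', Set.mem_iUnion, Set.mem_image]
    rintro g _ ⟨g', s, hs, rfl⟩
    exact ⟨g * g', s, hs, by simp⟩
  obtain ⟨s, hs, hs0⟩ := hS
  obtain ⟨ψ, hψ, _, hx, hψx⟩ :=
    hX.2 S' hS'A hS' ⟨s, Set.mem_iUnion.mpr ⟨1, s, hs, by simp⟩, hs0⟩ Y hY
  obtain ⟨g, s, hs, rfl⟩ := Set.mem_iUnion.mp hx
  refine ⟨ψ, hψ, s, hs, fun h0 => hψx ?_⟩
  rw [← map_zero (Y.act g), ← h0, ← hψ]

end GVar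

namespace MvPolynomial

variable (R : Type*) [CommSemiring R] {σ : Type*}

def renameEquivHom : Equiv.Perm σ →* (MvPolynomial σ R ≃ₐ[R] MvPolynomial σ R) where
  toFun := renameEquiv R
  map_one' := renameEquiv_refl R
  map_mul' e f := (renameEquiv_trans R f e).symm

end MvPolynomial

section Regular

variable (k : Type) [Field k] (G : Type) [Group G]

abbrev RegularField : Type := FractionRing (MvPolynomial G k)

def regularAct : G →* (RegularField k G ≃ₐ[k] RegularField k G) :=
  (IsFractionRing.fieldEquivOfAlgEquivHom k (RegularField k G)).comp
    ((MvPolynomial.renameEquivHom k).comp (MulAction.toPermHom G G))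

variable {k G} in
@[simp]
lemma regularAct_algebraMap (g : G) (p : MvPolynomial G k) :
    regularAct k G g (algebraMap _ _ p) = algebraMap _ _ (MvPolynomial.rename (g * ·) p) :=
  IsFractionRing.fieldEquivOfAlgEquiv_algebraMap _ _ _ _ p

abbrev regularVar [Finite G] : GVar k G where
  E := RegularField k G
  act := regularAct k G
  A := (IsScalarTower.toAlgHom k (MvPolynomial G k) (RegularField k G)).range
  fg := by rw [← Algebra.map_top]; exact Algebra.FiniteType.out.map _
  stable := by
    rintro g _ ⟨p, rfl⟩
    exact ⟨MvPolynomial.rename (g * ·) p, (regularAct_algebraMap g p).symm⟩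
  frac x := by
    obtain ⟨a, b, hb, rfl⟩ := IsFractionRing.div_surjective (A := MvPolynomial G k) x
    exact ⟨_, ⟨a, rfl⟩, _, ⟨b, rfl⟩,
      IsFractionRing.to_map_ne_zero_of_mem_nonZeroDivisors hb, rfl⟩

lemma regularVar_faithful [Finite G] : (regularVar k G).Faithful := by
  intro g g' h
  have := congrArg (fun e : RegularField k G ≃ₐ[k] RegularField k G =>
    e (algebraMap (MvPolynomial G k) _ (MvPolynomial.X 1))) h
  simp only [regularAct_algebraMap] at this
  simpa [MvPolynomial.X_injective.eq_iff,
    (IsFractionRing.injective (MvPolynomial G k) (RegularField k G)).eq_iff] using this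

end Regular

section Density

open Submodule

variable {k L : Type*} [Field k] [Field L] [Algebra k L]

def equivariantFunctions {G : Type*} [Group G] {H : Subgroup G} (act : H →* (L ≃ₐ[k] L)) :
    Submodule k (G → L) where
  carrier := {c | ∀ (h : H) (x : G), c (h * x) = act h (c x)}
  add_mem' ha hb h x := by simp [ha h x, hb h x]
  zero_mem' h x := by simp
  smul_mem' t c hc h x := by simp [hc h x]

variable {G : Type*} [Group G] {H : Subgroup G} {act : H →* (L ≃ₐ[k] L)}

lemma extend_mul_right_mem_equivariantFunctions (g₀ : G) (b : L) :
    Function.extend (fun h : H => (h : G) * g₀) (fun h => act h b) 0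
      ∈ equivariantFunctions act := by
  have he : Function.Injective (fun h : H => (h : G) * g₀) :=
    fun h h' hh => Subtype.ext (mul_right_cancel hh)
  intro h x
  by_cases hx : ∃ h' : H, (h' : G) * g₀ = x
  · obtain ⟨h', rfl⟩ := hx
    have := he.extend_apply (fun h => act h b) 0 (h * h')
    simp only [Subgroup.coe_mul, mul_assoc] at this
    simp [this, he.extend_apply]
  · have : ¬∃ h' : H, (h' : G) * g₀ = h * x := fun ⟨h', hh'⟩ =>
      hx ⟨h⁻¹ * h', by simp [mul_assoc, hh']⟩
    simp [Function.extend_apply' _ _ _ hx, Function.extend_apply' _ _ _ this]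

/-- Dedekind's independence of characters, spread over the right cosets of `H`. -/
theorem span_equivariantFunctions_eq_top [Finite G] (hact : Function.Injective act) :
    span L (equivariantFunctions act : Set (G → L)) = ⊤ := by
  classical
  have hind : LinearIndependent L (fun h : H => ⇑(act h)) :=
    (linearIndependent_monoidHom L L).comp (fun h => (act h : L ≃* L).toMonoidHom)
      fun h h' hh => hact (AlgEquiv.ext fun x => DFunLike.congr_fun hh x)
  have hspan := span_flip_eq_top_iff_linearIndependent.mpr hind
  rw [eq_top_iff, ← (Pi.basisFun L G).span_eq, span_le]
  rintro _ ⟨g₀, rfl⟩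
  let e := Function.ExtendByZero.linearMap L (fun h : H => (h : G) * g₀)
  have he : Function.Injective (fun h : H => (h : G) * g₀) :=
    fun h h' hh => Subtype.ext (mul_right_cancel hh)
  have hsingle : Pi.basisFun L G g₀ = e (Pi.single 1 1) := by
    funext x
    by_cases hx : ∃ h : H, (h : G) * g₀ = x
    · obtain ⟨h, rfl⟩ := hx
      rw [Pi.basisFun_apply]
      simp only [e, Function.ExtendByZero.linearMap_apply, he.extend_apply]
      by_cases h1 : h = 1
      · simp [h1]
      · rw [Pi.single_eq_of_ne h1, Pi.single_eq_of_ne]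
        exact fun hh => h1 (he (by simpa using hh))
    · have : x ≠ g₀ := fun hx' => hx ⟨1, by simp [hx']⟩
      simp [e, Function.extend_apply' _ _ _ hx, Pi.single_eq_of_ne this]
  have himage : e '' Set.range (flip fun h : H => ⇑(act h)) ⊆ equivariantFunctions act := by
    rintro _ ⟨_, ⟨b, rfl⟩, rfl⟩
    exact extend_mul_right_mem_equivariantFunctions g₀ b
  rw [hsingle]
  refine span_mono himage ?_
  rw [← map_span]
  exact mem_map_of_mem (hspan ▸ mem_top)

lemma aeval_rename_mul_left_of_mem_equivariantFunctions {c : G → L}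
    (hc : c ∈ equivariantFunctions act) (h : H) (p : MvPolynomial G k) :
    MvPolynomial.aeval c (MvPolynomial.rename ((h : G) * ·) p)
      = act h (MvPolynomial.aeval c p) := by
  rw [MvPolynomial.aeval_rename, ← AlgEquiv.coe_toAlgHom, MvPolynomial.comp_aeval_apply]
  exact congrArg (MvPolynomial.aeval · p) (funext fun x => hc h x)

end Density

open Submodule in
theorem MvPolynomial.exists_mem_aeval_ne_zero_of_span_eq_top {k L σ : Type*} [Field k]
    [Infinite k] [Field L] [Algebra k L] {W : Submodule k (σ → L)}
    (hW : span L (W : Set (σ → L)) = ⊤) {D : MvPolynomial σ k} (hD : D ≠ 0) :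
    ∃ c ∈ W, aeval c D ≠ 0 := by
  by_contra! hvan
  have hall : ∀ c : σ → L, aeval c D = 0 := by
    intro c
    obtain ⟨T, hTW, hc⟩ :=
      mem_span_finite_of_mem_span (hW ▸ mem_top : c ∈ span L (W : Set (σ → L)))
    obtain ⟨μ, rfl⟩ := mem_span_finset'.mp hc
    -- `P(y) = D(∑ y_u u)` has coefficients in `L` and vanishes on the `k`-points `y`.
    let P : MvPolynomial T L := aeval (fun i => ∑ u : T, C (u.1 i) * X u) D
    have hP : ∀ y : T → L, eval y P = aeval (∑ u : T, y u • u.1) D := by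
      intro y
      change (aeval y).restrictScalars k (aeval _ D) = _
      rw [comp_aeval_apply]
      refine congrArg (aeval · D) (_root_.funext fun i => ?_)
      simp [mul_comm]
    have hP0 : P = 0 := by
      refine funext_set (fun _ => Set.range (algebraMap k L))
        (fun _ => Set.infinite_range_of_injective (algebraMap k L).injective) fun y hy => ?_
      choose b hb using Set.mem_univ_pi.mp hy
      have hy : y = fun u => algebraMap k L (b u) := _root_.funext fun u => (hb u).symm
      rw [hP, map_zero, hy]
      simp_rw [algebraMap_smul]
      exact hvan _ (sum_mem fun u _ => W.smul_mem _ (hTW u.2))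
    simpa [hP0] using (hP μ).symm
  refine hD (MvPolynomial.funext fun b => ?_)
  apply (algebraMap k L).injective
  simpa [aeval_def, eval₂_comp] using hall (algebraMap k L ∘ b)

section Specialization

open nonZeroDivisors

variable {k R F L : Type*} [Field k] [CommRing R] [Algebra k R] [Field F] [Algebra R F]
  [IsFractionRing R F] [Field L] [Algebra k L] (ev : R →ₐ[k] L)

def evalNonvanishing : Submonoid R := L⁰.comap ev

lemma mem_evalNonvanishing {q : R} : q ∈ evalNonvanishing ev ↔ ev q ≠ 0 :=
  mem_nonZeroDivisors_iff_ne_zero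

variable [IsDomain R]

lemma evalNonvanishing_le : evalNonvanishing ev ≤ R⁰ := fun q hq =>
  mem_nonZeroDivisors_of_ne_zero fun h => (mem_evalNonvanishing ev).mp hq (by simp [h])

variable (F) in
/-- The local ring of the point `ev` inside the function field `F`. -/
def localSubalgebra : Subalgebra R F :=
  Localization.subalgebra.ofField F (evalNonvanishing ev) (evalNonvanishing_le ev)

instance : IsLocalization (evalNonvanishing ev) (localSubalgebra F ev) :=
  Localization.subalgebra.isLocalization_ofField ..

lemma div_mem_localSubalgebra {p q : R} (hq : ev q ≠ 0) :
    algebraMap R F p / algebraMap R F q ∈ localSubalgebra F ev :=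
  ⟨p, q, (mem_evalNonvanishing ev).mpr hq, div_eq_mul_inv _ _⟩

lemma exists_ne_zero_forall_mem_localSubalgebra (s : Finset F) :
    ∃ D : R, D ≠ 0 ∧
      ∀ ev : R →ₐ[k] L, ev D ≠ 0 → ∀ x ∈ s, x ∈ localSubalgebra F ev := by
  choose num den hden hx using fun x : F => IsFractionRing.div_surjective (A := R) x
  refine ⟨∏ x ∈ s, den x,
    Finset.prod_ne_zero_iff.mpr fun x _ => nonZeroDivisors.ne_zero (hden x),
    fun ev hev x hxs => ?_⟩
  rw [map_prod, Finset.prod_ne_zero_iff] at hev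
  rw [← hx x]
  exact div_mem_localSubalgebra ev (hev x hxs)

variable [Algebra k F] [IsScalarTower k R F]

lemma exists_ne_zero_forall_apply_mem_localSubalgebra {A : Type*} [CommRing A] [Algebra k A]
    [Algebra.FiniteType k A] (ψ : A →ₐ[k] F) (a₀ : A) :
    ∃ D : R, D ≠ 0 ∧ ∀ ev : R →ₐ[k] L, ev D ≠ 0 →
      (∀ a, ψ a ∈ localSubalgebra F ev) ∧ (ψ a₀)⁻¹ ∈ localSubalgebra F ev := by
  classical
  obtain ⟨t, ht⟩ := Algebra.FiniteType.out (R := k) (A := A)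
  obtain ⟨D, hD, hmem⟩ :=
    exists_ne_zero_forall_mem_localSubalgebra (k := k) (R := R) (L := L)
      (insert (ψ a₀)⁻¹ (t.image ψ))
  refine ⟨D, hD, fun ev hev => ⟨fun a => ?_, hmem ev hev _ (Finset.mem_insert_self _ _)⟩⟩
  have : (⊤ : Subalgebra k A).map ψ ≤ (localSubalgebra F ev).restrictScalars k := by
    rw [← ht, AlgHom.map_adjoin, Algebra.adjoin_le_iff]
    rintro _ ⟨x, hx, rfl⟩
    exact hmem ev hev _ (Finset.mem_insert_of_mem (Finset.mem_image_of_mem _ hx))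
  exact this ⟨a, trivial, rfl⟩

def evalLift : localSubalgebra F ev →ₐ[k] L :=
  IsLocalization.liftAlgHom (M := evalNonvanishing ev) (f := ev)
    fun q => ((mem_evalNonvanishing ev).mp q.2).isUnit

lemma evalLift_eq_div (z : localSubalgebra F ev) {p q : R} (hq : ev q ≠ 0)
    (h : (z : F) = algebraMap R F p / algebraMap R F q) : evalLift ev z = ev p / ev q := by
  have hq' : algebraMap R F q ≠ 0 := IsFractionRing.to_map_ne_zero_of_mem_nonZeroDivisors
    (evalNonvanishing_le ev ((mem_evalNonvanishing ev).mpr hq))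
  have hz : z * algebraMap R _ q = algebraMap R _ p :=
    Subtype.ext (by simp [h, div_mul_cancel₀ _ hq'])
  rw [eq_div_iff hq]
  simpa [evalLift, IsLocalization.lift_eq] using congrArg (evalLift ev) hz

lemma evalLift_ne_zero {z : localSubalgebra F ev} (hz : (z : F) ≠ 0)
    (hz' : (z : F)⁻¹ ∈ localSubalgebra F ev) : evalLift ev z ≠ 0 := by
  refine left_ne_zero_of_mul_eq_one (b := evalLift ev (⟨_, hz'⟩ : localSubalgebra F ev)) ?_
  rw [← map_mul, ← map_one (evalLift (F := F) ev)]
  exact congrArg _ (Subtype.ext (mul_inv_cancel₀ hz))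

lemma evalLift_map {σ : F ≃ₐ[k] F} {τ : R →ₐ[k] R}
    (hστ : ∀ p, σ (algebraMap R F p) = algebraMap R F (τ p)) {ρ : L ≃ₐ[k] L}
    (hρ : ∀ p, ev (τ p) = ρ (ev p)) {z z' : localSubalgebra F ev} (hz : (z' : F) = σ z) :
    evalLift ev z' = ρ (evalLift ev z) := by
  obtain ⟨p, q, hq, hpq⟩ := z.2
  rw [← div_eq_mul_inv] at hpq
  have hq := (mem_evalNonvanishing ev).mp hq
  rw [evalLift_eq_div ev z hq hpq, evalLift_eq_div ev z' (q := τ q) (by simpa [hρ] using hq)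
    (by rw [hz, hpq, map_div₀, hστ, hστ]), hρ, hρ, map_div₀]

end Specialization

theorem GVar.IsEquivariant.exists_specialization {k : Type} [Field k] [Infinite k] [Finite G]
    {H : Subgroup G} {X Y : GVar k H} (hY : Y.Faithful)
    {ψ : X.A →ₐ[k] RegularField k G} (hψ : X.IsEquivariant ((regularVar k G).res H) ψ)
    {a₀ : X.A} (ha₀ : ψ a₀ ≠ 0) :
    ∃ φ : X.A →ₐ[k] Y.E, X.IsEquivariant Y φ ∧ φ a₀ ≠ 0 := by
  have : Algebra.FiniteType k X.A := (Subalgebra.fg_iff_finiteType _).mp X.fg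
  obtain ⟨D, hD, hT⟩ :=
    exists_ne_zero_forall_apply_mem_localSubalgebra (R := MvPolynomial G k) (L := Y.E) ψ a₀
  obtain ⟨c, hc, hcD⟩ := MvPolynomial.exists_mem_aeval_ne_zero_of_span_eq_top
    (span_equivariantFunctions_eq_top hY) hD
  obtain ⟨hmem, hinv⟩ := hT _ hcD
  let ev : MvPolynomial G k →ₐ[k] Y.E := MvPolynomial.aeval c
  refine ⟨(evalLift ev).comp (ψ.codRestrict ((localSubalgebra _ ev).restrictScalars k) hmem),
    fun h a => ?_, evalLift_ne_zero ev ha₀ hinv⟩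
  exact evalLift_map ev (σ := regularAct k G h) (τ := MvPolynomial.rename ((h : G) * ·))
    (regularAct_algebraMap (h : G)) (aeval_rename_mul_left_of_mem_equivariantFunctions hc h)
    (hψ h a)

/-- Let `G` be a finite group, `X` a versal `G`-variety over a characteristic-zero field,
and `H ⊆ G` a subgroup.  Then `X` is also a versal `H`-variety. -/
theorem isVersal_res (k : Type) [Field k] [CharZero k]
    (G : Type) [Group G] [Finite G] (X : GVar k G) (hX : X.IsVersal)
    (H : Subgroup G) :
    (X.res H).IsVersal := by
  refine ⟨hX.1.res H, fun S hSA _ hS Y hY => ?_⟩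
  obtain ⟨ψ, hψ, s, hs, hψs⟩ :=
    hX.exists_isEquivariant_ne_zero hSA hS (regularVar_faithful k G)
  obtain ⟨φ, hφ, hφs⟩ := (hψ.res H).exists_specialization hY hψs
  exact ⟨φ, hφ, s, hs, hφs⟩
end
end

section
/- Let G be a finite group, Y a versal G-variety, and X a faithful G-variety. If there exists a G-equivariant dominant rational map Y ⇢ X, then X is versal. -/
/-!
Versality of `Y` gives, for every faithful `Z`, an equivariant `ψ : k[Y] → k(Z)` that does not
vanish at a prescribed nonzero `c ∈ k[Y]`. If `c` is the product of the numerator of `j s₀` and the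
denominators of `j` at `s₀` and at finitely many generators of `k[X]`, then `j` maps `k[X]` into
the local ring of `k[Y]` at `ψ`, to which `ψ` extends. The composite `k[X] → k(Z)` is equivariant
and does not vanish at `s₀`.
-/

noncomputable section

variable {G : Type} [Group G]

namespace AlgHom

variable {k E L : Type*} [Field k] [Field E] [Field L] [Algebra k E] [Algebra k L]
  {A : Subalgebra k E} (ψ : A →ₐ[k] L)

/-- `Localization ψ.nonvanishing` is the local ring of `A` at the point `ψ`; `fractionMap`
realises it as the fractions `a / b` in `E` with `ψ b ≠ 0`, and `ψ` extends to it. -/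
def nonvanishing : Submonoid A := (nonZeroDivisors L).comap ψ

theorem mem_nonvanishing {b : A} : b ∈ ψ.nonvanishing ↔ ψ b ≠ 0 :=
  mem_nonZeroDivisors_iff_ne_zero

theorem coe_ne_zero_of_map_ne_zero {b : A} (hb : ψ b ≠ 0) : (b : E) ≠ 0 :=
  fun h => hb (by rw [show b = 0 from Subtype.ext h, map_zero])

def fractionMap : Localization ψ.nonvanishing →ₐ[k] E :=
  IsLocalization.liftAlgHom (f := A.val) fun b =>
    isUnit_iff_ne_zero.2 (ψ.coe_ne_zero_of_map_ne_zero (ψ.mem_nonvanishing.1 b.2))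

def extension : Localization ψ.nonvanishing →ₐ[k] L :=
  IsLocalization.liftAlgHom (f := ψ) fun b => isUnit_iff_ne_zero.2 (ψ.mem_nonvanishing.1 b.2)

theorem fractionMap_mk' (a : A) (b : ψ.nonvanishing) :
    ψ.fractionMap (IsLocalization.mk' _ a b) = a / b := by
  rw [fractionMap, IsLocalization.coe_liftAlgHom, IsLocalization.lift_mk'_spec]
  exact (mul_div_cancel₀ _ (ψ.coe_ne_zero_of_map_ne_zero (ψ.mem_nonvanishing.1 b.2))).symm

theorem extension_mk' (a : A) (b : ψ.nonvanishing) :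
    ψ.extension (IsLocalization.mk' _ a b) = ψ a / ψ b := by
  rw [extension, IsLocalization.coe_liftAlgHom, IsLocalization.lift_mk'_spec]
  exact (mul_div_cancel₀ _ (ψ.mem_nonvanishing.1 b.2)).symm

theorem fractionMap_injective : Function.Injective ψ.fractionMap := by
  rw [fractionMap, IsLocalization.coe_liftAlgHom, IsLocalization.lift_injective_iff]
  intro x y
  have hle : ψ.nonvanishing ≤ nonZeroDivisors A := fun b hb =>
    mem_nonZeroDivisors_of_ne_zero fun h => ψ.mem_nonvanishing.1 hb (by rw [h, map_zero])
  rw [(IsLocalization.injective (Localization ψ.nonvanishing) hle).eq_iff]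
  exact Subtype.coe_inj.symm

theorem mem_range_fractionMap {x : E} :
    x ∈ ψ.fractionMap.range ↔ ∃ a b : A, ψ b ≠ 0 ∧ x = a / b := by
  constructor
  · rintro ⟨y, rfl⟩
    obtain ⟨⟨a, b⟩, rfl⟩ := IsLocalization.mk'_surjective ψ.nonvanishing y
    exact ⟨a, b, ψ.mem_nonvanishing.1 b.2, ψ.fractionMap_mk' a b⟩
  · rintro ⟨a, b, hb, rfl⟩
    exact ⟨_, ψ.fractionMap_mk' a ⟨b, ψ.mem_nonvanishing.2 hb⟩⟩

theorem exists_lift_of_range_le {D : Type*} [CommRing D] [Algebra k D] (f : D →ₐ[k] E)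
    (hf : f.range ≤ ψ.fractionMap.range) :
    ∃ φ : D →ₐ[k] L, ∀ (d : D) (a b : A), ψ b ≠ 0 → f d = a / b → φ d = ψ a / ψ b := by
  let e := AlgEquiv.ofInjective _ ψ.fractionMap_injective
  let f' := f.codRestrict _ fun d => hf ⟨d, rfl⟩
  refine ⟨ψ.extension.comp (e.symm.toAlgHom.comp f'), fun d a b hb hd => ?_⟩
  have he : e (IsLocalization.mk' _ a ⟨b, ψ.mem_nonvanishing.2 hb⟩) = f' d :=
    Subtype.ext ((ψ.fractionMap_mk' _ _).trans hd.symm)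
  change ψ.extension (e.symm (f' d)) = _
  rw [← he, e.symm_apply_apply, extension_mk']

end AlgHom

namespace GVar

variable {k : Type} [Field k]

def Equivariant (X Y : GVar k G) (ψ : X.A →ₐ[k] Y.E) : Prop :=
  ∀ (g : G) (a : X.A), ψ ⟨X.act g a, X.stable g a a.2⟩ = Y.act g (ψ a)

theorem exists_eq_div (X : GVar k G) (x : X.E) : ∃ a b : X.A, (b : X.E) ≠ 0 ∧ x = a / b := by
  obtain ⟨a, ha, b, hb, hb0, rfl⟩ := X.frac x
  exact ⟨⟨a, ha⟩, ⟨b, hb⟩, hb0, rfl⟩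

/-- Apply versality to the `G`-orbit of `c`: an equivariant map that is nonzero somewhere on the
orbit is nonzero at `c`. -/
theorem IsVersal.exists_equivariant_map_ne_zero {Y : GVar k G} (hY : Y.IsVersal) {c : Y.A}
    (hc : (c : Y.E) ≠ 0) (Z : GVar k G) (hZ : Z.Faithful) :
    ∃ ψ : Y.A →ₐ[k] Z.E, Y.Equivariant Z ψ ∧ ψ c ≠ 0 := by
  obtain ⟨ψ, hψ, _, ⟨g, rfl⟩, hψg⟩ := hY.2 (Set.range fun g => Y.act g c)
    (Set.range_subset_iff.2 fun g => Y.stable g c c.2)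
    (by rintro g _ ⟨h, rfl⟩; exact ⟨g * h, by simp only [map_mul, AlgEquiv.mul_apply]⟩)
    ⟨c, ⟨1, by simp only [map_one, AlgEquiv.one_apply]⟩, hc⟩ Z hZ
  refine ⟨ψ, hψ, fun h => hψg ?_⟩
  rw [hψ, h, map_zero]

theorem exists_equivariant_extension {X Y Z : GVar k G} (j : X.E →ₐ[k] Y.E)
    (hj : ∀ (g : G) (x : X.E), j (X.act g x) = Y.act g (j x))
    (ψ : Y.A →ₐ[k] Z.E) (hψ : Y.Equivariant Z ψ)
    (hrange : (j.comp X.A.val).range ≤ ψ.fractionMap.range) :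
    ∃ φ : X.A →ₐ[k] Z.E, X.Equivariant Z φ ∧
      ∀ (a : X.A) (u v : Y.A), ψ v ≠ 0 → j a = u / v → φ a = ψ u / ψ v := by
  obtain ⟨φ, hφ⟩ := ψ.exists_lift_of_range_le _ hrange
  refine ⟨φ, fun g a => ?_, hφ⟩
  obtain ⟨u, v, hv, hjuv⟩ := ψ.mem_range_fractionMap.1 (hrange ⟨a, rfl⟩)
  have hgv : ψ ⟨Y.act g v, Y.stable g v v.2⟩ ≠ 0 := by
    rw [hψ]
    exact (map_ne_zero _).2 hv
  have hjg : j (X.act g a) = Y.act g u / Y.act g v := by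
    rw [hj, show j a = u / v from hjuv, map_div₀]
  rw [hφ _ ⟨_, Y.stable g u u.2⟩ _ hgv hjg, hφ a u v hv hjuv, hψ, hψ, map_div₀]

end GVar

theorem isVersal_of_dominant_general (k : Type) [Field k]
    (G : Type) [Group G] (Y X : GVar k G)
    (hY : Y.IsVersal) (hX : X.Faithful)
    (j : X.E →ₐ[k] Y.E)
    (hj : ∀ (g : G) (x : X.E), j (X.act g x) = Y.act g (j x)) :
    X.IsVersal := by
  classical
  refine ⟨hX, fun S hSA _ ⟨s₀, hs₀, hs₀0⟩ Z hZ => ?_⟩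
  obtain ⟨t, ht⟩ := X.fg
  choose num den hden hnd using fun x => Y.exists_eq_div (j x)
  have hnum : (num s₀ : Y.E) ≠ 0 := (div_ne_zero_iff.1 (hnd s₀ ▸ (map_ne_zero j).2 hs₀0)).1
  -- `c` is the numerator of `j s₀` times the denominators of `j` at `s₀` and at the generators
  have hc : ((num s₀ * ∏ x ∈ insert s₀ t, den x : Y.A) : Y.E) ≠ 0 := by
    push_cast
    exact mul_ne_zero hnum (Finset.prod_ne_zero_iff.2 fun x _ => hden x)
  obtain ⟨ψ, hψ, hψc⟩ := hY.exists_equivariant_map_ne_zero hc Z hZ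
  rw [map_mul, map_prod] at hψc
  have hψden : ∀ x ∈ insert s₀ t, ψ (den x) ≠ 0 :=
    Finset.prod_ne_zero_iff.1 (right_ne_zero_of_mul hψc)
  have hrange : (j.comp X.A.val).range ≤ ψ.fractionMap.range := by
    rw [AlgHom.range_comp, Subalgebra.range_val, ← ht, AlgHom.map_adjoin, Algebra.adjoin_le_iff]
    rintro _ ⟨x, hx, rfl⟩
    exact ψ.mem_range_fractionMap.2 ⟨_, _, hψden x (Finset.mem_insert_of_mem hx), hnd x⟩
  obtain ⟨φ, hφ, hφdiv⟩ := GVar.exists_equivariant_extension j hj ψ hψ hrange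
  have hψs₀ := hψden s₀ (Finset.mem_insert_self _ _)
  refine ⟨φ, hφ, s₀, hs₀, ?_⟩
  rw [hφdiv ⟨s₀, hSA hs₀⟩ _ _ hψs₀ (hnd s₀)]
  exact div_ne_zero (left_ne_zero_of_mul hψc) hψs₀

/-- Let `G` be a finite group, `Y` a versal `G`-variety over a characteristic-zero field,
and `X` a faithful `G`-variety.  If there is a `G`-equivariant dominant rational map
`Y ⇢ X` (equivalently, a `G`-equivariant `k`-embedding of function fields
`k(X) → k(Y)`), then `X` is versal. -/
theorem isVersal_of_dominant (k : Type) [Field k] [CharZero k]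
    (G : Type) [Group G] [Finite G] (Y X : GVar k G)
    (hY : Y.IsVersal) (hX : X.Faithful)
    (j : X.E →ₐ[k] Y.E)
    (hj : ∀ (g : G) (x : X.E), j (X.act g x) = Y.act g (j x)) :
    X.IsVersal :=
  isVersal_of_dominant_general k G Y X hY hX j hj
end
end

section
/- For any finite group G over a characteristic-0 field k, every faithful linear G-variety (i.e., the affine space of a faithful linear representation of G) is a versal G-variety. -/
noncomputable section

variable {G : Type} [Group G]

/-- `X` is (a birational model of) the affine space `A(V)` of a faithful finite-dimensional
linear representation `V` of `G`: there is a finite-dimensional `G`-stable subspace `W ⊆ E`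
of linear coordinates (the dual of `V`) on which `G` acts faithfully, spanned by
algebraically independent elements, which generates the affine model `A`. -/
def GVar.IsFaithfulLinear {k : Type} [Field k] (X : GVar k G) : Prop :=
  ∃ W : Submodule k X.E,
    (∀ g : G, ∀ w ∈ W, X.act g w ∈ W) ∧
    (∀ g : G, (∀ w ∈ W, X.act g w = w) → g = 1) ∧
    X.A = Algebra.adjoin k (W : Set X.E) ∧
    ∃ s : Finset X.E, (s : Set X.E) ⊆ (W : Set X.E) ∧
      Submodule.span k (s : Set X.E) = W ∧
      AlgebraicIndependent k (fun x : (s : Set X.E) => (x : X.E))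

/-! Coordinates on `W` identify `k`-algebra maps `A → k(Y)` with points `u ∈ k(Y)ⁿ`, and such a
map is equivariant as soon as the linear map `W → k(Y)` with values `u` is. Summing `g ∘ φ ∘ g⁻¹`
over `G` produces equivariant maps, and by Dedekind's independence of the distinct characters
`g : k(Y) → k(Y)` these sums span `Hom_k(W, k(Y))` over `k(Y)`. So the equivariant points form a
`k`-subspace of `k(Y)ⁿ` spanning it over `k(Y)`, and as `k` is infinite, the polynomial expressing
`s ∈ S` in the coordinates cannot vanish on all of it. -/

open MvPolynomial Submodule Representation

theorem Submodule.span_range_sum_eq_top_of_semilinear {K V ι : Type*} [Field K] [AddCommGroup V]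
    [Module K V] [Fintype ι] {σ : ι → K →+* K} (hσ : Function.Injective σ) (A : ι → V → V)
    (hA : ∀ i (c : K) v, A i (c • v) = σ i c • A i v) {i₀ : ι} (hi₀ : ∀ v, A i₀ v = v) :
    span K (Set.range fun v => ∑ i, A i v) = ⊤ := by
  by_contra h
  obtain ⟨f, hf, hker⟩ := exists_le_ker_of_lt_top _ (lt_top_iff_ne_top.2 h)
  have hsum : ∀ v, ∑ i, f (A i v) • ⇑(σ i : K →* K) = 0 := fun v => funext fun c => by
    simpa [hA, mul_comm] using hker (subset_span (Set.mem_range_self (c • v)))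
  have hinj : Function.Injective fun i => (σ i : K →* K) := fun i j hij =>
    hσ (RingHom.ext fun c => DFunLike.congr_fun hij c)
  have hcoeff := Fintype.linearIndependent_iff.1 ((linearIndependent_monoidHom K K).comp _ hinj)
  exact hf (LinearMap.ext fun v => by simpa [hi₀] using hcoeff _ (hsum v) i₀)

theorem Representation.span_range_norm_linHom_eq_top {k E W G : Type*} [Field k] [Field E]
    [Algebra k E] [AddCommGroup W] [Module k W] [Group G] [Fintype G] (ρ : Representation k G W)
    {σ : G →* (E ≃ₐ[k] E)} (hσ : Function.Injective σ) :
    span E (Set.range (linHom ρ ((AlgEquiv.toLinearMapHom k E).comp σ)).norm) = ⊤ := by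
  set τ : Representation k G E := (AlgEquiv.toLinearMapHom k E).comp σ
  have hσ' : Function.Injective fun g => (σ g : E →+* E) := fun g h hgh =>
    hσ (AlgEquiv.ext fun x => DFunLike.congr_fun hgh x)
  have hsemilinear : ∀ g (c : E) φ, linHom ρ τ g (c • φ) = (σ g : E →+* E) c • linHom ρ τ g φ := by
    intro g c φ
    ext w
    simp [τ]
  have hnorm : ⇑(linHom ρ τ).norm = fun φ => ∑ g, linHom ρ τ g φ :=
    funext fun φ => LinearMap.sum_apply _ _ _
  rw [hnorm]
  exact span_range_sum_eq_top_of_semilinear hσ' _ hsemilinear (i₀ := 1) fun φ => by simp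

theorem Representation.span_invariants_linHom_eq_top {k E W G : Type*} [Field k] [Field E]
    [Algebra k E] [AddCommGroup W] [Module k W] [Group G] [Fintype G] (ρ : Representation k G W)
    {σ : G →* (E ≃ₐ[k] E)} (hσ : Function.Injective σ) :
    span E ((linHom ρ ((AlgEquiv.toLinearMapHom k E).comp σ)).invariants : Set (W →ₗ[k] E)) = ⊤ :=
  top_unique <| (ρ.span_range_norm_linHom_eq_top hσ).ge.trans <|
    span_mono <| Set.range_subset_iff.2 fun φ g => self_norm_apply _ g φ

theorem Module.Basis.span_comap_constr_eq_top {k E W ι : Type*} [Field k] [Field E] [Algebra k E]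
    [AddCommGroup W] [Module k W] (b : Module.Basis ι k W) {Q : Submodule k (W →ₗ[k] E)}
    (hQ : span E (Q : Set (W →ₗ[k] E)) = ⊤) :
    span E (Q.comap (b.constr k).toLinearMap : Set (ι → E)) = ⊤ := by
  set e : (ι → E) ≃ₗ[E] (W →ₗ[k] E) := b.constr E
  have hsub : e.symm '' Q ⊆ (Q.comap (b.constr k).toLinearMap : Set (ι → E)) := by
    rintro _ ⟨φ, hφ, rfl⟩
    change b.constr k (e.symm φ) ∈ Q
    rwa [show b.constr k (e.symm φ) = φ from e.apply_symm_apply φ]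
  refine eq_top_iff.2 ?_
  calc ⊤ = (span E (Q : Set (W →ₗ[k] E))).map e.symm.toLinearMap := by
        rw [hQ, Submodule.map_top, LinearEquiv.range]
    _ = span E (e.symm '' Q) := map_span _ _
    _ ≤ _ := span_mono hsub

theorem MvPolynomial.exists_mem_eval_ne_zero_of_span_eq_top {k E ι : Type*} [Field k] [Infinite k]
    [Field E] [Algebra k E] [Finite ι] {V : Submodule k (ι → E)}
    (hV : span E (V : Set (ι → E)) = ⊤) {P : MvPolynomial ι E} (hP : P ≠ 0) :
    ∃ v ∈ V, eval v P ≠ 0 := by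
  obtain ⟨T, hTV, hT, hTli⟩ := exists_linearIndependent E (V : Set (ι → E))
  have : Fintype T := hTli.setFinite.fintype
  set R : MvPolynomial T E := bind₁ (fun i => ∑ v : T, C ((v : ι → E) i) * X v) P
  have heval : ∀ t : T → E, eval t R = eval (∑ v : T, t v • (v : ι → E)) P := fun t => by
    change eval₂Hom (RingHom.id E) t (bind₁ _ P) = _
    rw [eval₂Hom_bind₁]
    congr 2
    funext i
    simp [mul_comm]
  have hR : R ≠ 0 := by
    have : Infinite E := .of_injective _ (algebraMap k E).injective
    refine fun h0 => hP (MvPolynomial.funext fun y => ?_)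
    obtain ⟨t, rfl⟩ := (mem_span_range_iff_exists_fun E).1
      (show y ∈ span E (Set.range ((↑) : T → ι → E)) by simp [hT, hV])
    simp [← heval, h0]
  obtain ⟨t, ht, htR⟩ : ∃ t ∈ Set.pi .univ fun _ => Set.range (algebraMap k E), eval t R ≠ 0 := by
    by_contra! h
    exact hR (funext_set _ (fun _ => Set.infinite_range_of_injective (algebraMap k E).injective)
      fun t ht => by simp [h t ht])
  choose c hc using fun v => ht v trivial
  refine ⟨∑ v : T, c v • (v : ι → E), sum_mem fun v _ => V.smul_mem _ (hTV v.2), ?_⟩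
  simpa [heval, ← hc, algebraMap_smul] using htR

theorem AlgebraicIndependent.aeval_repr_of_mem_span {k E B ι : Type*} [CommRing k]
    [CommRing E] [Algebra k E] [CommRing B] [Algebra k B] {w : ι → E}
    (hw : AlgebraicIndependent k w) (u : ι → B) {x : E} (hx : x ∈ span k (Set.range w)) :
    aeval u (hw.repr ⟨x, Algebra.span_le_adjoin k _ hx⟩) =
      (Module.Basis.span hw.linearIndependent).constr k u ⟨x, hx⟩ := by
  induction hx using Submodule.span_induction with
  | mem x hx =>
    obtain ⟨i, rfl⟩ := hx
    have hrepr :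
        hw.repr ⟨w i, Algebra.span_le_adjoin k _ (subset_span (Set.mem_range_self i))⟩ = X i :=
      hw.aevalEquiv.injective (Subtype.ext (by simp [AlgebraicIndependent.repr]))
    have hb : (⟨w i, subset_span (Set.mem_range_self i)⟩ : span k (Set.range w)) =
        Module.Basis.span hw.linearIndependent i := Subtype.ext (by simp)
    rw [hrepr, aeval_X, hb, Module.Basis.constr_basis]
  | zero => exact (map_zero ((aeval u).comp hw.repr)).trans (map_zero _).symm
  | add x y _ _ ihx ihy =>
    have h := congrArg₂ (· + ·) ihx ihy
    simp only [← map_add] at h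
    exact h
  | smul c x _ ih =>
    have h := congrArg (c • ·) ih
    simp only [← map_smul] at h
    exact h

theorem exists_equivariant_algHom_ne_zero {k E B ι G : Type*} [Field k] [Infinite k] [CommRing E]
    [Algebra k E] [Field B] [Algebra k B] [Finite ι] [Group G] [Fintype G]
    {σE : G →* (E ≃ₐ[k] E)} {σB : G →* (B ≃ₐ[k] B)} (hσB : Function.Injective σB)
    {w : ι → E} (hw : AlgebraicIndependent k w)
    (hspan : ∀ g, ∀ x ∈ span k (Set.range w), σE g x ∈ span k (Set.range w))
    {A : Subalgebra k E} (hA : A = Algebra.adjoin k (Set.range w))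
    (hstab : ∀ g, ∀ x ∈ A, σE g x ∈ A) {a : A} (ha : a ≠ 0) :
    ∃ ψ : A →ₐ[k] B, (∀ g (x : A), ψ ⟨σE g x, hstab g x x.2⟩ = σB g (ψ x)) ∧ ψ a ≠ 0 := by
  subst hA
  set W := span k (Set.range w)
  let ρ : Representation k G W :=
    Representation.subrepresentation ((AlgEquiv.toLinearMapHom k E).comp σE) W hspan
  let b : Module.Basis ι k W := .span hw.linearIndependent
  have hP : map (algebraMap k B) (hw.repr a) ≠ 0 :=
    (map_ne_zero_iff _ (map_injective _ (algebraMap k B).injective)).2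
      ((map_ne_zero_iff _ hw.aevalEquiv.symm.injective).2 ha)
  obtain ⟨u, hu, hPu⟩ := exists_mem_eval_ne_zero_of_span_eq_top
    (b.span_comap_constr_eq_top (ρ.span_invariants_linHom_eq_top hσB)) hP
  have hφ : IsIntertwiningMap ρ ((AlgEquiv.toLinearMapHom k B).comp σB) (b.constr k u) :=
    (mem_linHom_invariants_iff_isIntertwining _).1 hu
  refine ⟨(aeval u).comp hw.repr, fun g x => ?_, by simpa [eval_map, ← aeval_def] using hPu⟩
  let σA : Algebra.adjoin k (Set.range w) →ₐ[k] Algebra.adjoin k (Set.range w) :=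
    ((σE g : E →ₐ[k] E).comp (Subalgebra.val _)).codRestrict _ fun y => hstab g y y.2
  suffices ((aeval u).comp hw.repr).comp σA = (σB g : B →ₐ[k] B).comp ((aeval u).comp hw.repr) from
    DFunLike.congr_fun this x
  refine AlgHom.ext_of_adjoin_eq_top Algebra.adjoin_adjoin_coe_preimage fun y hy => ?_
  have hyW : (y : E) ∈ W := subset_span hy
  calc aeval u (hw.repr (σA y)) = b.constr k u ⟨σE g y, hspan g y hyW⟩ :=
        hw.aeval_repr_of_mem_span u _
    _ = b.constr k u (ρ g ⟨y, hyW⟩) := rfl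
    _ = σB g (b.constr k u ⟨y, hyW⟩) := hφ.isIntertwining g _
    _ = σB g (aeval u (hw.repr y)) := congrArg (σB g) (hw.aeval_repr_of_mem_span u hyW).symm

theorem GVar.IsFaithfulLinear.faithful {k : Type} [Field k] {X : GVar k G}
    (hX : X.IsFaithfulLinear) : X.Faithful := by
  obtain ⟨W, -, hWfaith, -⟩ := hX
  refine (injective_iff_map_eq_one X.act).2 fun g hg => hWfaith g fun w _ => ?_
  simp [hg]

/-- For any finite group `G` over a characteristic-zero field `k`, every faithful linear
`G`-variety (the affine space of a faithful linear representation of `G`) is a versal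
`G`-variety. -/
theorem isVersal_of_faithfulLinear (k : Type) [Field k] [CharZero k]
    (G : Type) [Group G] [Finite G] (X : GVar k G)
    (hX : X.IsFaithfulLinear) :
    X.IsVersal := by
  refine ⟨hX.faithful, fun S hSA _ ⟨s₀, hs₀S, hs₀⟩ Y hY => ?_⟩
  obtain ⟨W, hWstab, -, hA, s, -, rfl, hs⟩ := hX
  have : Fintype G := Fintype.ofFinite G
  obtain ⟨ψ, hψ, hψs₀⟩ := exists_equivariant_algHom_ne_zero hY hs
    (by rwa [Subtype.range_coe]) (by rw [hA, Algebra.adjoin_span, Subtype.range_coe]) X.stable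
    (a := ⟨s₀, hSA hs₀S⟩) (by simpa [Subtype.ext_iff] using hs₀)
  exact ⟨ψ, hψ, s₀, hs₀S, hψs₀⟩
end
end
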